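/- Let W, D, T be random variables on a common probability space taking values in finite sets, with p(W=w)>0 for all w in the range of W, and suppose D and T are conditionally independent given W. Fix d, t with p(D=d)>0, p(T=t)>0, p(D=d,T=t)>0, and suppose p(W=w | D=d) > 0 and p(W=w | T=t) > 0 whenever p(W=w | D=d, T=t) > 0. Write π = p(W=· | D=d, T=t), and define the pointwise parameter information PI(d) = KL(π ‖ p(W=·)) − KL(π ‖ p(W=· | D=d)), PI(t) = KL(π ‖ p(W=·)) − KL(π ‖ p(W=· | T=t)), PI(d∪t) = KL(π ‖ p(W=·)) − KL(π ‖ π), and the conditional pointwise parameter information PI(d|t) = KL(π ‖ p(W=· | T=t)) − KL(π ‖ π), PI(t|d) = KL(π ‖ p(W=· | D=d)) − KL(π ‖ π). Then the pointwise mutual information PMI(d,t) = log( p(D=d,T=t)/(p(D=d)·p(T=t)) ) satisfies PMI(d,t) = PI(d) + PI(t) − PI(d∪t) = PI(d) − PI(d|t) = PI(t) − PI(t|d). -/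

import Mathlib

/-!
Conditional independence of `D` and `T` given `W` is Bayes' rule in the form
`p(w | d) p(w | t) = (p(d,t) / (p(d) p(t))) · p(w | d,t) p(w)`. Taking logarithms, the
alternating sum of the four log-ratios `log (π w / ·)` against `p(w)`, `p(w | d)`, `p(w | t)`
and `π w` is the constant `PMI(d,t)` on the support of `π`; averaging over `π` turns it into
`KL(π‖p(W)) - KL(π‖p(W|d)) - KL(π‖p(W|t)) + KL(π‖π) = PMI(d,t)`, and each of the three
identities is a rearrangement of this one.
-/

open Finset
open scoped Classical

/-- Probability of an event under a pmf on a finite sample space. -/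
noncomputable def pr {Ω : Type*} [Fintype Ω] (p : Ω → ℝ) (E : Ω → Prop) : ℝ :=
  ∑ ω, if E ω then p ω else 0

/-- Conditional probability `p(E | F)`. -/
noncomputable def cpr {Ω : Type*} [Fintype Ω] (p : Ω → ℝ) (E F : Ω → Prop) : ℝ :=
  pr p (fun ω => E ω ∧ F ω) / pr p F

/-- `X` and `Y` are conditionally independent given `Z`. -/
def CondIndepRV {Ω A B C : Type*} [Fintype Ω] (p : Ω → ℝ)
    (X : Ω → A) (Y : Ω → B) (Z : Ω → C) : Prop :=
  ∀ x y z, 0 < pr p (fun ω => Z ω = z) →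
    cpr p (fun ω => X ω = x ∧ Y ω = y) (fun ω => Z ω = z) =
      cpr p (fun ω => X ω = x) (fun ω => Z ω = z) *
      cpr p (fun ω => Y ω = y) (fun ω => Z ω = z)

/-- KL divergence between two pmfs on a finite set. -/
noncomputable def klD {A : Type*} [Fintype A] (q r : A → ℝ) : ℝ :=
  ∑ w, if 0 < q w then q w * Real.log (q w / r w) else 0

lemma pr_nonneg {Ω : Type*} [Fintype Ω] {p : Ω → ℝ} (hp : ∀ ω, 0 ≤ p ω)
    (E : Ω → Prop) : 0 ≤ pr p E :=
  Finset.sum_nonneg fun ω _ => by split <;> simp [hp ω]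

lemma pr_congr {Ω : Type*} [Fintype Ω] (p : Ω → ℝ) {E F : Ω → Prop}
    (h : ∀ ω, E ω ↔ F ω) : pr p E = pr p F :=
  Finset.sum_congr rfl fun ω _ => by simp [h ω]

lemma sum_pr_and {Ω A : Type*} [Fintype Ω] [Fintype A] (p : Ω → ℝ)
    (X : Ω → A) (E : Ω → Prop) :
    ∑ x, pr p (fun ω => X ω = x ∧ E ω) = pr p E := by
  unfold pr
  rw [Finset.sum_comm]
  refine Finset.sum_congr rfl fun ω _ => ?_
  by_cases hE : E ω <;> simp [hE]

lemma cpr_nonneg {Ω : Type*} [Fintype Ω] {p : Ω → ℝ} (hp : ∀ ω, 0 ≤ p ω)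
    (E F : Ω → Prop) : 0 ≤ cpr p E F :=
  div_nonneg (pr_nonneg hp _) (pr_nonneg hp _)

lemma sum_cpr_eq_one {Ω A : Type*} [Fintype Ω] [Fintype A] (p : Ω → ℝ)
    (X : Ω → A) {F : Ω → Prop} (hF : pr p F ≠ 0) :
    ∑ x, cpr p (fun ω => X ω = x) F = 1 := by
  simp only [cpr]
  rw [← Finset.sum_div, sum_pr_and, div_self hF]

theorem CondIndepRV.cpr_mul_cpr {Ω A B C : Type*} [Fintype Ω] {p : Ω → ℝ}
    {X : Ω → A} {Y : Ω → B} {Z : Ω → C} (h : CondIndepRV p X Y Z) {x : A} {y : B} {z : C}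
    (hz : 0 < pr p (fun ω => Z ω = z)) (hx : pr p (fun ω => X ω = x) ≠ 0)
    (hy : pr p (fun ω => Y ω = y) ≠ 0) (hxy : pr p (fun ω => X ω = x ∧ Y ω = y) ≠ 0) :
    cpr p (fun ω => Z ω = z) (fun ω => X ω = x) * cpr p (fun ω => Z ω = z) (fun ω => Y ω = y) =
      pr p (fun ω => X ω = x ∧ Y ω = y) /
          (pr p (fun ω => X ω = x) * pr p (fun ω => Y ω = y)) *
        (cpr p (fun ω => Z ω = z) (fun ω => X ω = x ∧ Y ω = y) * pr p (fun ω => Z ω = z)) := by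
  have hci := h x y z hz
  simp only [cpr] at hci ⊢
  rw [pr_congr p (E := fun ω => Z ω = z ∧ X ω = x) fun ω => and_comm,
    pr_congr p (E := fun ω => Z ω = z ∧ Y ω = y) fun ω => and_comm,
    pr_congr p (E := fun ω => Z ω = z ∧ X ω = x ∧ Y ω = y) fun ω => and_comm]
  rw [div_mul_div_comm, div_eq_div_iff hz.ne' (by positivity)] at hci
  field_simp
  refine mul_right_cancel₀ hz.ne' ?_
  linear_combination hci.symm

lemma klD_eq_sum {A : Type*} [Fintype A] {q : A → ℝ} (hq : ∀ w, 0 ≤ q w) (r : A → ℝ) :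
    klD q r = ∑ w, q w * Real.log (q w / r w) :=
  Finset.sum_congr rfl fun w _ => by
    split_ifs with h
    · rfl
    · simp [le_antisymm (not_lt.mp h) (hq w)]

lemma log_div_sub_log_div_sub_log_div_add_log_div_self {a r s u c : ℝ} (ha : 0 < a)
    (hr : 0 < r) (hs : 0 < s) (hu : 0 < u) (hc : 0 < c) (h : s * u = c * (a * r)) :
    Real.log (a / r) - Real.log (a / s) - Real.log (a / u) + Real.log (a / a) = Real.log c := by
  have hlog := congrArg Real.log h
  rw [Real.log_mul hs.ne' hu.ne', Real.log_mul hc.ne' (by positivity),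
    Real.log_mul ha.ne' hr.ne'] at hlog
  rw [div_self ha.ne', Real.log_one, Real.log_div ha.ne' hr.ne', Real.log_div ha.ne' hs.ne',
    Real.log_div ha.ne' hu.ne']
  linarith

lemma klD_sub_klD_sub_klD_add_klD_self {A : Type*} [Fintype A] {q r s u : A → ℝ} {c : ℝ}
    (hq : ∀ w, 0 ≤ q w) (hq1 : ∑ w, q w = 1) (hc : 0 < c)
    (hr : ∀ w, 0 < q w → 0 < r w) (hs : ∀ w, 0 < q w → 0 < s w) (hu : ∀ w, 0 < q w → 0 < u w)
    (h : ∀ w, 0 < q w → s w * u w = c * (q w * r w)) :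
    klD q r - klD q s - klD q u + klD q q = Real.log c := by
  simp only [klD_eq_sum hq, ← Finset.sum_sub_distrib, ← Finset.sum_add_distrib, ← mul_sub,
    ← mul_add]
  calc ∑ w, q w * (Real.log (q w / r w) - Real.log (q w / s w) - Real.log (q w / u w) +
          Real.log (q w / q w))
      = ∑ w, q w * Real.log c := Finset.sum_congr rfl fun w _ => by
        rcases (hq w).eq_or_lt with h0 | hpos
        · simp [← h0]
        · rw [log_div_sub_log_div_sub_log_div_add_log_div_self hpos (hr w hpos) (hs w hpos)
            (hu w hpos) hc (h w hpos)]
    _ = Real.log c := by rw [← Finset.sum_mul, hq1, one_mul]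

theorem stmt10_general {Ω W D T : Type*} [Fintype Ω] [Fintype W] [Fintype D] [Fintype T]
    (p : Ω → ℝ) (hp : ∀ ω, 0 ≤ p ω)
    (Wv : Ω → W) (Dv : Ω → D) (Tv : Ω → T)
    (hW : ∀ w, 0 < pr p (fun ω => Wv ω = w))
    (hCI : CondIndepRV p Dv Tv Wv)
    (d : D) (t : T)
    (hd : 0 < pr p (fun ω => Dv ω = d))
    (ht : 0 < pr p (fun ω => Tv ω = t))
    (hdt : 0 < pr p (fun ω => Dv ω = d ∧ Tv ω = t))
    (hposd : ∀ w, 0 < cpr p (fun ω => Wv ω = w) (fun ω => Dv ω = d ∧ Tv ω = t) →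
      0 < cpr p (fun ω => Wv ω = w) (fun ω => Dv ω = d))
    (hpost : ∀ w, 0 < cpr p (fun ω => Wv ω = w) (fun ω => Dv ω = d ∧ Tv ω = t) →
      0 < cpr p (fun ω => Wv ω = w) (fun ω => Tv ω = t)) :
    -- the posterior of `W` given `D = d, T = t`
    let π : W → ℝ := fun w => cpr p (fun ω => Wv ω = w) (fun ω => Dv ω = d ∧ Tv ω = t)
    -- pointwise parameter information of `d`, of `t`, and of `d ∪ t`
    let PId : ℝ := klD π (fun w => pr p (fun ω => Wv ω = w)) -
      klD π (fun w => cpr p (fun ω => Wv ω = w) (fun ω => Dv ω = d))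
    let PIt : ℝ := klD π (fun w => pr p (fun ω => Wv ω = w)) -
      klD π (fun w => cpr p (fun ω => Wv ω = w) (fun ω => Tv ω = t))
    let PIdt : ℝ := klD π (fun w => pr p (fun ω => Wv ω = w)) - klD π π
    -- conditional pointwise parameter information `PI(d|t)` and `PI(t|d)`
    let PIdgt : ℝ := klD π (fun w => cpr p (fun ω => Wv ω = w) (fun ω => Tv ω = t)) -
      klD π π
    let PItgd : ℝ := klD π (fun w => cpr p (fun ω => Wv ω = w) (fun ω => Dv ω = d)) -
      klD π π
    -- pointwise mutual information
    let PMI : ℝ := Real.log (pr p (fun ω => Dv ω = d ∧ Tv ω = t) /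
      (pr p (fun ω => Dv ω = d) * pr p (fun ω => Tv ω = t)))
    PMI = PId + PIt - PIdt ∧ PMI = PId - PIdgt ∧ PMI = PIt - PItgd := by
  intro π PId PIt PIdt PIdgt PItgd PMI
  have key : klD π (fun w => pr p (fun ω => Wv ω = w)) -
      klD π (fun w => cpr p (fun ω => Wv ω = w) (fun ω => Dv ω = d)) -
      klD π (fun w => cpr p (fun ω => Wv ω = w) (fun ω => Tv ω = t)) + klD π π = PMI :=
    klD_sub_klD_sub_klD_add_klD_self (fun w => cpr_nonneg hp _ _)
      (sum_cpr_eq_one p Wv hdt.ne') (by positivity) (fun w _ => hW w) hposd hpost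
      fun w _ => (hCI.cpr_mul_cpr (hW w) hd.ne' ht.ne' hdt.ne').trans (by ring)
  refine ⟨?_, ?_, ?_⟩ <;> linarith

theorem stmt10 {Ω W D T : Type*} [Fintype Ω] [Fintype W] [Fintype D] [Fintype T]
    (p : Ω → ℝ) (hp : ∀ ω, 0 ≤ p ω) (hps : ∑ ω, p ω = 1)
    (Wv : Ω → W) (Dv : Ω → D) (Tv : Ω → T)
    (hW : ∀ w, 0 < pr p (fun ω => Wv ω = w))
    (hCI : CondIndepRV p Dv Tv Wv)
    (d : D) (t : T)
    (hd : 0 < pr p (fun ω => Dv ω = d))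
    (ht : 0 < pr p (fun ω => Tv ω = t))
    (hdt : 0 < pr p (fun ω => Dv ω = d ∧ Tv ω = t))
    (hposd : ∀ w, 0 < cpr p (fun ω => Wv ω = w) (fun ω => Dv ω = d ∧ Tv ω = t) →
      0 < cpr p (fun ω => Wv ω = w) (fun ω => Dv ω = d))
    (hpost : ∀ w, 0 < cpr p (fun ω => Wv ω = w) (fun ω => Dv ω = d ∧ Tv ω = t) →
      0 < cpr p (fun ω => Wv ω = w) (fun ω => Tv ω = t)) :
    -- the posterior of `W` given `D = d, T = t`
    let π : W → ℝ := fun w => cpr p (fun ω => Wv ω = w) (fun ω => Dv ω = d ∧ Tv ω = t)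
    -- pointwise parameter information of `d`, of `t`, and of `d ∪ t`
    let PId : ℝ := klD π (fun w => pr p (fun ω => Wv ω = w)) -
      klD π (fun w => cpr p (fun ω => Wv ω = w) (fun ω => Dv ω = d))
    let PIt : ℝ := klD π (fun w => pr p (fun ω => Wv ω = w)) -
      klD π (fun w => cpr p (fun ω => Wv ω = w) (fun ω => Tv ω = t))
    let PIdt : ℝ := klD π (fun w => pr p (fun ω => Wv ω = w)) - klD π π
    -- conditional pointwise parameter information `PI(d|t)` and `PI(t|d)`
    let PIdgt : ℝ := klD π (fun w => cpr p (fun ω => Wv ω = w) (fun ω => Tv ω = t)) -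
      klD π π
    let PItgd : ℝ := klD π (fun w => cpr p (fun ω => Wv ω = w) (fun ω => Dv ω = d)) -
      klD π π
    -- pointwise mutual information
    let PMI : ℝ := Real.log (pr p (fun ω => Dv ω = d ∧ Tv ω = t) /
      (pr p (fun ω => Dv ω = d) * pr p (fun ω => Tv ω = t)))
    PMI = PId + PIt - PIdt ∧ PMI = PId - PIdgt ∧ PMI = PIt - PItgd :=
  stmt10_general p hp Wv Dv Tv hW hCI d t hd ht hdt hposd hpost
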